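/- Let G be a ρ-uniform irreducible positively recurrent stochastic graph and φ : G → I a homomorphism onto the Bernoulli graph. Then there exists a set F ⊆ X_G with m_G(F) = 1 such that whenever x = (x_n)_n and y = (y_n)_n belong to F, t(x₁) = t(y₁), and φ(x_n) = φ(y_n) for all n ∈ ℕ, one has x = y. (Equivalently: ζ⁰_G ∨ δ_φ^{(∞)} = ε, i.e. a.e. point of X_G is determined modulo 0 by the terminal vertex of its first edge together with its φ-itinerary.) -/

import Mathlib

open MeasureTheory
open scoped ENNReal Classical

namespace OneSidedMarkov

noncomputable section

/-- The canonical σ-algebra on a sequence space over a (countable) alphabet: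
the product of the discrete σ-algebras on the coordinates. -/
instance seqMS (E : Type*) : MeasurableSpace (ℕ → E) :=
  @MeasurableSpace.pi ℕ (fun _ => E) fun _ => ⊤

/-- Measurability of a map into a (countable) set carrying the discrete σ-algebra. -/
def DMeasurable {X : Type*} [MeasurableSpace X] {A : Type*} (f : X → A) : Prop :=
  ∀ a : A, MeasurableSet (f ⁻¹' {a})

/-- The cylinder set determined by a finite word. -/
def cyl {E : Type*} {n : ℕ} (g : Fin n → E) : Set (ℕ → E) :=
  {x | ∀ k : Fin n, x (k : ℕ) = g k}

/-- The one-sided shift on a sequence space. -/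
def shift {E : Type*} (x : ℕ → E) : ℕ → E := fun n => x (n + 1)

/-- `ρ` is a strictly positive probability vector. -/
def IsProbVector {I : Type*} (ρ : I → ℝ≥0∞) : Prop :=
  (∀ i, 0 < ρ i) ∧ ∑' i, ρ i = 1

/-- `μ` is the Bernoulli (product) measure with marginal `ρ`. -/
def IsProductMeasure {I : Type*} (ρ : I → ℝ≥0∞) (μ : Measure (ℕ → I)) : Prop :=
  IsProbabilityMeasure μ ∧ ∀ (n : ℕ) (w : Fin n → I), μ (cyl w) = ∏ k, ρ (w k)

/-- Isomorphism mod 0 of two measure-preserving systems: a measure-preserving map,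
invertible after discarding null sets, intertwining the transformations a.e. -/
def IsomorphicMod0 {X Y : Type*} [MeasurableSpace X] [MeasurableSpace Y]
    (μ : Measure X) (T : X → X) (ν : Measure Y) (S : Y → Y) : Prop :=
  ∃ Φ : X → Y, MeasurePreserving Φ μ ν ∧ (∀ᵐ x ∂μ, Φ (T x) = S (Φ x)) ∧
    ∃ Ψ : Y → X, MeasurePreserving Ψ ν μ ∧
      (∀ᵐ x ∂μ, Ψ (Φ x) = x) ∧ ∀ᵐ y ∂ν, Φ (Ψ y) = y

/-! ### Stochastic graphs -/

/-- The data of a weighted directed graph: edge set `E`, vertex set `V`,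
source and target maps, and weights on edges. -/
structure PreGraph (E V : Type*) where
  s : E → V
  t : E → V
  p : E → ℝ≥0∞

variable {E V F W : Type*}

namespace PreGraph

/-- A weighted directed graph is stochastic if weights are positive, the weights of the
edges starting at any given vertex sum to `1`, and every vertex has an outgoing and
an incoming edge. -/
def IsStochastic (G : PreGraph E V) : Prop :=
  (∀ g, 0 < G.p g) ∧ (∀ u : V, ∑' g : {g : E // G.s g = u}, G.p g.1 = 1) ∧
    (∀ u : V, ∃ g, G.s g = u) ∧ ∀ v : V, ∃ g, G.t g = v

/-- `p0` is a stationary probability on the vertices of `G`. -/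
def IsStationary (G : PreGraph E V) (p0 : V → ℝ≥0∞) : Prop :=
  (∀ u, 0 < p0 u) ∧ ∑' u, p0 u = 1 ∧
    ∀ v : V, ∑' g : {g : E // G.t g = v}, G.p g.1 * p0 (G.s g.1) = p0 v

/-- `G` is positively recurrent iff a stationary probability exists. -/
def PositivelyRecurrent (G : PreGraph E V) : Prop := ∃ p0, G.IsStationary p0

/-- One-step reachability along a directed edge. -/
def Step (G : PreGraph E V) (u v : V) : Prop := ∃ g, G.s g = u ∧ G.t g = v

/-- `G` is irreducible: any ordered pair of vertices is joined by a finite directed path. -/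
protected def Irreducible (G : PreGraph E V) : Prop :=
  ∀ u v : V, Relation.ReflTransGen G.Step u v

/-- The (backward) path condition for finite words of edges:
`s (g k) = t (g (k+1))` for consecutive indices. -/
def IsPathW (G : PreGraph E V) {n : ℕ} (g : Fin n → E) : Prop :=
  ∀ (k : ℕ) (h : k + 1 < n), G.s (g ⟨k, Nat.lt_of_succ_lt h⟩) = G.t (g ⟨k + 1, h⟩)

/-- The set of admissible one-sided infinite (backward) paths. -/
def PathSet (G : PreGraph E V) : Set (ℕ → E) := {x | ∀ n, G.s (x n) = G.t (x (n + 1))}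

/-- `m` is the stationary Markov measure of `(G, p0)`, characterized by its values on
cylinder sets: the cylinder over a backward path `g₁ … gₙ` has mass
`p g₁ ⋯ p gₙ · p0 (s gₙ)`, and cylinders over non-paths are null. -/
def IsMarkovMeasure (G : PreGraph E V) (p0 : V → ℝ≥0∞) (m : Measure (ℕ → E)) : Prop :=
  IsProbabilityMeasure m ∧
    ∀ (n : ℕ) (g : Fin (n + 1) → E),
      m (cyl g) =
        if G.IsPathW g then (∏ k, G.p (g k)) * p0 (G.s (g (Fin.last n))) else 0

end PreGraph

/-- A (weight-preserving, deterministic) homomorphism of weighted directed graphs. -/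
structure GraphHom (G : PreGraph E V) (H : PreGraph F W) where
  toFun : E → F
  vFun : V → W
  map_s : ∀ g, H.s (toFun g) = vFun (G.s g)
  map_t : ∀ g, H.t (toFun g) = vFun (G.t g)
  map_p : ∀ g, H.p (toFun g) = G.p g
  v_surj : Function.Surjective vFun
  deterministic : ∀ (u : V) (h : F), H.s h = vFun u → ∃! g : E, G.s g = u ∧ toFun g = h

namespace GraphHom

variable {G : PreGraph E V} {H : PreGraph F W}

/-- The factor map induced on path spaces by a graph homomorphism. -/
def pathMap (φ : GraphHom G H) (x : ℕ → E) : ℕ → F := fun n => φ.toFun (x n)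

/-- `φ` has degree `d` (with respect to the Markov measure `m` on the source):
almost every fiber of the induced factor map, within the path space, has exactly
`d` elements. -/
def HasDegree (φ : GraphHom G H) (m : Measure (ℕ → E)) (d : ℕ) : Prop :=
  ∀ᵐ x ∂m, (G.PathSet ∩ φ.pathMap ⁻¹' {φ.pathMap x}).Finite ∧
    (G.PathSet ∩ φ.pathMap ⁻¹' {φ.pathMap x}).ncard = d

/-- A homomorphism is an isomorphism of graphs if it is bijective on edges and
on vertices. -/
def IsIso (φ : GraphHom G H) : Prop :=
  Function.Bijective φ.toFun ∧ Function.Bijective φ.vFun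

end GraphHom

/-- The standard Bernoulli graph: a single vertex, edge set `I` with weights `ρ`. -/
def bernoulliGraph {I : Type*} (ρ : I → ℝ≥0∞) : PreGraph I Unit :=
  ⟨fun _ => (), fun _ => (), ρ⟩

/-- The graph skew product `H̄ₐ` of `H` by a function `a` into the permutations of
`Fin d`. -/
def gsp (H : PreGraph F W) {d : ℕ} (a : F → Equiv.Perm (Fin d)) :
    PreGraph (F × Fin d) (W × Fin d) where
  s := fun hy => (H.s hy.1, hy.2)
  t := fun hy => (H.t hy.1, a hy.1 hy.2)
  p := fun hy => H.p hy.1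

/-- Two functions `a₁ a₂ : H → 𝒜_d` are cohomologous with respect to `H`. -/
def Cohomologous (H : PreGraph F W) {d : ℕ} (a₁ a₂ : F → Equiv.Perm (Fin d)) : Prop :=
  ∃ w : W → Equiv.Perm (Fin d), ∀ h, a₂ h * w (H.s h) = w (H.t h) * a₁ h

/-- The map `fᵢ : G⁰ → G⁰` induced by a homomorphism onto the Bernoulli graph:
`fᵢ u` is the target of the unique edge starting at `u` sent to `i`. -/
def GraphHom.fmap {I : Type*} {G : PreGraph E V} {ρ : I → ℝ≥0∞}
    (φ : GraphHom G (bernoulliGraph ρ)) (i : I) (u : V) : V :=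
  G.t (φ.deterministic u i (Subsingleton.elim _ _)).exists.choose

/-- Composite of the maps determined by a finite word. -/
def compWord {U I : Type*} (f : I → U → U) {n : ℕ} (w : Fin n → I) : U → U :=
  (List.ofFn fun k => f (w k)).foldr (· ∘ ·) id

/-- The semigroup (set of all nonempty finite composites) generated by a family of
self-maps. -/
def genSem {U I : Type*} (f : I → U → U) : Set (U → U) :=
  {g | ∃ (n : ℕ) (w : Fin (n + 1) → I), g = compWord f w}

/-- `L` is a persistent `d`-set for the semigroup `S` of self-maps of `U`. -/
def PersistentSet {U : Type*} (S : Set (U → U)) (d : ℕ) (L : Set U) : Prop :=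
  L.Finite ∧ L.ncard = d ∧ (∀ f ∈ S, (f '' L).ncard = d) ∧
    ∀ A : Set U, A.Finite → ∃ f ∈ S, f '' A ⊆ L

/-- The semigroup `S` is `d`-contractive. -/
def IsDContractive {U : Type*} (S : Set (U → U)) (d : ℕ) : Prop :=
  ∃ L, PersistentSet S d L

/-- The itinerary (canonical factor) map of an endomorphism `T` relative to `δ`. -/
def itin {X I : Type*} (T : X → X) (δ : X → I) (x : X) : ℕ → I := fun n => δ (T^[n] x)

/-- `δ ∈ Δ_ρ(T)`: `δ` has law `ρ`, the σ-algebra generated by `δ` is independent of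
`T⁻¹𝓑`, and together they generate the whole σ-algebra modulo null sets. -/
def IsUniformGenerator {X : Type*} [mX : MeasurableSpace X] {I : Type*} (ρ : I → ℝ≥0∞)
    (m : Measure X) (T : X → X) (δ : X → I) : Prop :=
  DMeasurable δ ∧ (∀ i, m (δ ⁻¹' {i}) = ρ i) ∧
    ProbabilityTheory.Indep (MeasurableSpace.comap δ ⊤) (mX.comap T) m ∧
    ∀ A : Set X, MeasurableSet A →
      ∃ B : Set X, MeasurableSet[MeasurableSpace.comap δ ⊤ ⊔ mX.comap T] B ∧
        m (symmDiff A B) = 0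

/-- The fibers of `Φ` have cardinality `d ∈ ℕ∞` almost everywhere. -/
def HasFiberCard {X : Type*} [MeasurableSpace X] {I : Type*} (m : Measure X)
    (Φ : X → ℕ → I) (d : ℕ∞) : Prop :=
  ∀ᵐ x ∂m, (Φ ⁻¹' {Φ x}).encard = d

/-- `d` is the minimal index `d(T)` of the `ρ`-uniform endomorphism `T`. -/
def HasMinimalIndex {X : Type*} [MeasurableSpace X] {I : Type*} (ρ : I → ℝ≥0∞)
    (m : Measure X) (T : X → X) (d : ℕ∞) : Prop :=
  (∃ δ : X → I, IsUniformGenerator ρ m T δ ∧ HasFiberCard m (itin T δ) d) ∧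
    ∀ (δ : X → I) (d' : ℕ∞),
      IsUniformGenerator ρ m T δ → HasFiberCard m (itin T δ) d' → d ≤ d'

/-- The uniform probability measure on `Fin d`. -/
def unif (d : ℕ) : Measure (Fin d) := (d : ℝ≥0∞)⁻¹ • Measure.count

/-- The `n`-stringing graph `G⁽ⁿ⁾`: edges are the backward paths of length `n+1`,
vertices the backward paths of length `n`. -/
def stringing (G : PreGraph E V) (n : ℕ) :
    PreGraph {g : Fin (n + 1) → E // G.IsPathW g} {g : Fin n → E // G.IsPathW g} where
  s := fun g => ⟨fun k => g.1 k.succ, fun k h => g.2 (k + 1) (Nat.succ_lt_succ h)⟩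
  t := fun g => ⟨fun k => g.1 k.castSucc, fun k h => g.2 k (Nat.lt_succ_of_lt h)⟩
  p := fun g => ∏ k, G.p (g.1 k)

/-- A `(π,ψ)`-extension in `Ext^d(I,ρ)`: a graph skew product `d`-extension
`H̄ₐ → H` of a positively recurrent graph `H` admitting a degree-one homomorphism
`ψ : H → I` onto the Bernoulli graph, with `H̄ₐ` irreducible. -/
structure PiPsiExt (I : Type) (ρ : I → ℝ≥0∞) (d : ℕ) where
  F : Type
  W : Type
  countF : Countable F
  countW : Countable W
  H : PreGraph F W
  stoch : H.IsStochastic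
  a : F → Equiv.Perm (Fin d)
  ψ : GraphHom H (bernoulliGraph ρ)
  p0 : W → ℝ≥0∞
  stat : H.IsStationary p0
  m : Measure (ℕ → F)
  markov : H.IsMarkovMeasure p0 m
  deg1 : ψ.HasDegree m 1
  irr : (gsp H a).Irreducible

/-- The partial order on `Ext^d(I,ρ)`: `P₁ ≼ P` via homomorphisms `κ, κ̄` making the
diagram commute, with `a₁ ∘ κ` cohomologous to `a`. -/
def ExtLE {I : Type} {ρ : I → ℝ≥0∞} {d : ℕ} (P₁ P : PiPsiExt I ρ d) : Prop :=
  ∃ (κ : GraphHom P.H P₁.H) (κb : GraphHom (gsp P.H P.a) (gsp P₁.H P₁.a)),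
    (∀ g : P.F × Fin d, (κb.toFun g).1 = κ.toFun g.1) ∧
    (∀ g : P.F, P.ψ.toFun g = P₁.ψ.toFun (κ.toFun g)) ∧
    Cohomologous P.H P.a (fun h => P₁.a (κ.toFun h))

/-- Equivalence of `(π,ψ)`-extensions: as `ExtLE` but with `κ, κ̄` isomorphisms. -/
def ExtEquiv {I : Type} {ρ : I → ℝ≥0∞} {d : ℕ} (P₁ P : PiPsiExt I ρ d) : Prop :=
  ∃ (κ : GraphHom P.H P₁.H) (κb : GraphHom (gsp P.H P.a) (gsp P₁.H P₁.a)),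
    κ.IsIso ∧ κb.IsIso ∧
    (∀ g : P.F × Fin d, (κb.toFun g).1 = κ.toFun g.1) ∧
    (∀ g : P.F, P.ψ.toFun g = P₁.ψ.toFun (κ.toFun g)) ∧
    Cohomologous P.H P.a (fun h => P₁.a (κ.toFun h))

/-- An irreducible element of `(Ext^d(I,ρ), ≼)`. -/
def ExtIrreducible {I : Type} {ρ : I → ℝ≥0∞} {d : ℕ} (P : PiPsiExt I ρ d) : Prop :=
  ∀ P₁ : PiPsiExt I ρ d, ExtLE P₁ P → ExtEquiv P₁ P

end

end OneSidedMarkov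

namespace OneSidedMarkov

open MeasureTheory
open scoped ENNReal

/-!
A labelling `φ` onto the Bernoulli graph is right-resolving: an edge is determined by its source
and its label. Hence along a path `t (x n) = f (φ (x n)) (t (x (n + 1)))` with `f = φ.fmap`, and
the part of a path below time `n` is determined by `t (x n)` and the labels. If two paths `x ≠ y`
with the same labels and `t (x 0) = t (y 0)` exist, their vertex sequences agree at some time `N`
and differ at every later time. As `y` returns infinitely often to `a = t (y 0)` (Poincaré
recurrence for the shift), for infinitely many `k` the walk from `a` started at time `k + 1` and
driven by the labels of `shiftᴺ x` first meets the vertex sequence of `shiftᴺ x` at time `0`.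
Call this event `S k`. By shift invariance `m (S k) = m (shift^[L - k] ⁻¹' S k)`, and for fixed
`L` these preimages (`k ≤ L`) are disjoint: they are the events that the walk from `a` started at
time `L + 1` first meets the path at time `L - k`. So `∑ m (S k) ≤ 1`, and by Borel–Cantelli the
event happens for infinitely many `k` only on a null set.
-/

open Filter Set

section Cylinders

variable {E : Type*}

lemma measurable_apply (n : ℕ) : @Measurable (ℕ → E) E _ ⊤ fun x => x n :=
  @measurable_pi_apply ℕ (fun _ => E) (fun _ => ⊤) n

lemma measurableSet_cyl {n : ℕ} (g : Fin n → E) : MeasurableSet (cyl g) := by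
  have : cyl g = ⋂ k : Fin n, (fun x : ℕ → E => x k) ⁻¹' {g k} := by ext; simp [cyl]
  rw [this]
  exact .iInter fun k => measurable_apply (k : ℕ) (MeasurableSpace.measurableSet_top)

lemma shift_iterate_apply (N : ℕ) (x : ℕ → E) (k : ℕ) : shift^[N] x k = x (k + N) := by
  induction N generalizing x with
  | zero => rfl
  | succ N ih => rw [Function.iterate_succ_apply, ih]; rfl

lemma measurable_shift : Measurable (shift : (ℕ → E) → ℕ → E) :=
  @measurable_pi_lambda (ℕ → E) ℕ (fun _ => E) _ (fun _ => ⊤) shift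
    fun n => measurable_apply (n + 1)

lemma eq_iUnion_cyl_of_dependsOn {S : Set (ℕ → E)} {n : ℕ}
    (hS : ∀ x y, (∀ k < n, x k = y k) → x ∈ S → y ∈ S) :
    S = ⋃ g : {g : Fin n → E // cyl g ⊆ S}, cyl g.1 := by
  refine Subset.antisymm (fun x hx => mem_iUnion.2 ⟨⟨fun k => x k, fun y hy => ?_⟩, fun k => rfl⟩)
    (iUnion_subset fun g => g.2)
  exact hS x y (fun k hk => (hy ⟨k, hk⟩).symm) hx

-- Nonempty words only: these are the cylinders whose mass `IsMarkovMeasure` prescribes.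
def cylSets (E : Type*) : Set (Set (ℕ → E)) :=
  {S | ∃ (n : ℕ) (g : Fin (n + 1) → E), S = cyl g}

lemma cyl_inter_cyl_of_le {n n' : ℕ} (g : Fin n → E) (g' : Fin n' → E) (hle : n ≤ n')
    (hne : (cyl g ∩ cyl g').Nonempty) : cyl g ∩ cyl g' = cyl g' := by
  obtain ⟨x, hx, hx'⟩ := hne
  refine inter_eq_self_of_subset_right fun z hz k => ?_
  have hk : (k : ℕ) < n' := k.isLt.trans_le hle
  rw [hz ⟨k, hk⟩, ← hx' ⟨k, hk⟩, hx k]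

lemma isPiSystem_cylSets : IsPiSystem (cylSets E) := by
  rintro _ ⟨n, g, rfl⟩ _ ⟨n', g', rfl⟩ hne
  rcases le_total n n' with hle | hle
  · exact ⟨n', g', cyl_inter_cyl_of_le g g' (by omega) hne⟩
  · rw [inter_comm] at hne ⊢
    exact ⟨n, g, cyl_inter_cyl_of_le g' g (by omega) hne⟩

variable [Countable E]

lemma measurableSet_generateFrom_of_dependsOn {S : Set (ℕ → E)} {n : ℕ}
    (hS : ∀ x y, (∀ k < n, x k = y k) → x ∈ S → y ∈ S) :
    MeasurableSet[MeasurableSpace.generateFrom (cylSets E)] S := by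
  rw [eq_iUnion_cyl_of_dependsOn (n := n + 1) fun x y h => hS x y fun k hk => h k (by omega)]
  exact .iUnion fun g => MeasurableSpace.measurableSet_generateFrom ⟨n, g.1, rfl⟩

lemma seqMS_eq_generateFrom : seqMS E = MeasurableSpace.generateFrom (cylSets E) := by
  refine le_antisymm (iSup_le fun n => MeasurableSpace.comap_le_iff_le_map.2 fun A _ => ?_) ?_
  · exact measurableSet_generateFrom_of_dependsOn (n := n + 1) fun x y h hx => by
      rwa [mem_preimage, ← h n (by omega)]
  · exact MeasurableSpace.generateFrom_le fun _ ⟨n, g, hS⟩ => hS ▸ measurableSet_cyl g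

lemma measurableSet_of_dependsOn {S : Set (ℕ → E)} (n : ℕ)
    (hS : ∀ x y, (∀ k < n, x k = y k) → x ∈ S → y ∈ S) : MeasurableSet S := by
  rw [MeasurableSet, seqMS_eq_generateFrom]
  exact measurableSet_generateFrom_of_dependsOn hS

end Cylinders

section Markov

open Function

variable {E V : Type*} {G : PreGraph E V} {p0 : V → ℝ≥0∞} {m : Measure (ℕ → E)}

variable (G) in
lemma PreGraph.isPathW_cons_iff {n : ℕ} (e : E) (g : Fin (n + 1) → E) :
    G.IsPathW (Fin.cons e g : Fin (n + 2) → E) ↔ G.s e = G.t (g 0) ∧ G.IsPathW g := by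
  refine ⟨fun h => ⟨by simpa using h 0 (by omega), fun k hk => h (k + 1) (by omega)⟩, ?_⟩
  rintro ⟨h0, hg⟩ (_ | k) hk
  exacts [h0, hg k (by omega)]

lemma PreGraph.IsStochastic.tsum_ite_s_eq (hG : G.IsStochastic) (u : V) :
    ∑' e, (if G.s e = u then G.p e else 0) = 1 := by
  rw [← hG.2.1 u]
  exact (tsum_subtype {e | G.s e = u} G.p).symm

lemma PreGraph.IsMarkovMeasure.measure_cyl_cons (hm : G.IsMarkovMeasure p0 m) {n : ℕ}
    (e : E) (g : Fin (n + 1) → E) :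
    m (cyl (Fin.cons e g : Fin (n + 2) → E)) =
      (if G.s e = G.t (g 0) then G.p e else 0) * m (cyl g) := by
  rw [hm.2, hm.2]
  by_cases h0 : G.s e = G.t (g 0) <;> by_cases hg : G.IsPathW g <;>
    simp [G.isPathW_cons_iff, h0, hg, Fin.prod_univ_succ, mul_assoc]

lemma preimage_shift_cyl {n : ℕ} (g : Fin n → E) :
    shift ⁻¹' cyl g = ⋃ e, cyl (Fin.cons e g : Fin (n + 1) → E) := by
  ext x
  simp [cyl, shift, Fin.forall_fin_succ]

lemma PreGraph.IsMarkovMeasure.measure_preimage_shift_cyl [Countable E] (hG : G.IsStochastic)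
    (hm : G.IsMarkovMeasure p0 m) {n : ℕ} (g : Fin (n + 1) → E) :
    m (shift ⁻¹' cyl g) = m (cyl g) := by
  have hdisj : Pairwise (Disjoint on fun e => cyl (Fin.cons e g : Fin (n + 2) → E)) :=
    fun e e' hne => disjoint_left.2 fun x (hx : x ∈ cyl _) (hx' : x ∈ cyl _) =>
      hne ((hx 0).symm.trans (hx' 0))
  rw [preimage_shift_cyl, measure_iUnion hdisj fun e => measurableSet_cyl _,
    tsum_congr fun e => hm.measure_cyl_cons e g, ENNReal.tsum_mul_right, hG.tsum_ite_s_eq,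
    one_mul]

theorem PreGraph.IsMarkovMeasure.measurePreserving_shift [Countable E] (hG : G.IsStochastic)
    (hm : G.IsMarkovMeasure p0 m) : MeasurePreserving shift m m := by
  have := hm.1
  have : IsProbabilityMeasure (m.map shift) :=
    Measure.isProbabilityMeasure_map measurable_shift.aemeasurable
  refine ⟨measurable_shift, ext_of_generate_finite _ seqMS_eq_generateFrom isPiSystem_cylSets
    ?_ (by simp)⟩
  rintro _ ⟨n, g, rfl⟩
  rw [Measure.map_apply measurable_shift (measurableSet_cyl g),
    hm.measure_preimage_shift_cyl hG g]

lemma PreGraph.IsMarkovMeasure.ae_mem_pathSet [Countable E] (hm : G.IsMarkovMeasure p0 m) :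
    ∀ᵐ x ∂m, x ∈ G.PathSet := by
  have hsub : G.PathSetᶜ ⊆ ⋃ (n : ℕ) (g : {g : Fin (n + 2) → E // ¬ G.IsPathW g}), cyl g.1 := by
    intro x hx
    obtain ⟨n, hn⟩ := not_forall.1 hx
    exact mem_iUnion₂.2 ⟨n, ⟨fun k => x k, fun h => hn (h n (by omega))⟩, fun k => rfl⟩
  refine measure_mono_null hsub (measure_iUnion_null fun n => measure_iUnion_null fun g => ?_)
  rw [hm.2, if_neg g.2]

lemma PreGraph.IsMarkovMeasure.ae_frequently_t_eq_t_zero [Countable E] [Countable V]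
    (hG : G.IsStochastic) (hm : G.IsMarkovMeasure p0 m) :
    ∀ᵐ x ∂m, ∃ᶠ n in atTop, G.t (x n) = G.t (x 0) := by
  have := hm.1
  have hcons := (hm.measurePreserving_shift hG).conservative
  have hret : ∀ u, ∀ᵐ x ∂m, G.t (x 0) = u → ∃ᶠ n in atTop, G.t (x n) = u := fun u => by
    have hu : MeasurableSet {x : ℕ → E | G.t (x 0) = u} :=
      measurable_apply 0 (MeasurableSpace.measurableSet_top (s := {e | G.t e = u}))
    filter_upwards [hcons.ae_mem_imp_frequently_image_mem hu.nullMeasurableSet] with x hx h0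
    exact (hx h0).mono fun n (hn : G.t (shift^[n] x 0) = u) => by
      rwa [shift_iterate_apply, zero_add] at hn
  filter_upwards [ae_all_iff.2 hret] with x hx using hx _ rfl

end Markov

section Walk

variable {I U : Type*} (f : I → U → U)

def walk : (ℕ → I) → ℕ → U → U
  | _, 0 => id
  | σ, n + 1 => f (σ 0) ∘ walk (shift σ) n

lemma walk_congr {σ τ : ℕ → I} {n : ℕ} (h : ∀ k < n, σ k = τ k) : walk f σ n = walk f τ n := by
  induction n generalizing σ τ with
  | zero => rfl
  | succ n ih =>
    rw [walk, walk, h 0 n.succ_pos, @ih (shift σ) (shift τ) fun k hk => h (k + 1) (by omega)]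

/-- The walks driven by `σ` from `a` and from `u`, started at time `n` and run down to time `d`,
are at the same vertex (for `d ≥ n` this says `a = u`). -/
def WalksMeet (σ : ℕ → I) (n : ℕ) (a u : U) (d : ℕ) : Prop :=
  walk f (shift^[d] σ) (n - d) a = walk f (shift^[d] σ) (n - d) u

variable {f}

lemma walksMeet_antitone (σ : ℕ → I) (n : ℕ) (a u : U) : Antitone (WalksMeet f σ n a u) := by
  refine antitone_nat_of_succ_le fun d (h : WalksMeet f σ n a u (d + 1)) => ?_
  rcases lt_or_ge d n with hd | hd
  · obtain ⟨k, hk⟩ : ∃ k, n - d = k + 1 := ⟨n - (d + 1), by omega⟩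
    have hk' : n - (d + 1) = k := by omega
    rw [WalksMeet, Function.iterate_succ_apply', hk'] at h
    rw [WalksMeet, hk, walk, Function.comp_apply, Function.comp_apply, h]
  · rw [WalksMeet, Nat.sub_eq_zero_of_le (by omega : n ≤ d + 1)] at h
    rw [WalksMeet, Nat.sub_eq_zero_of_le hd]
    exact h

lemma walksMeet_iterate_shift (σ : ℕ → I) (n e : ℕ) (a u : U) (d : ℕ) :
    WalksMeet f (shift^[e] σ) n a u d ↔ WalksMeet f σ (n + e) a u (d + e) := by
  rw [WalksMeet, WalksMeet, ← Function.iterate_add_apply, show n + e - (d + e) = n - d by omega]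

lemma walksMeet_congr {σ τ : ℕ → I} {n : ℕ} (h : ∀ k < n, σ k = τ k) (a u : U) (d : ℕ) :
    WalksMeet f σ n a u d ↔ WalksMeet f τ n a u d := by
  rw [WalksMeet, WalksMeet, walk_congr f fun k hk => ?_]
  rw [shift_iterate_apply, shift_iterate_apply]
  exact h _ (by omega)

end Walk

section FirstMeet

variable {E V I : Type*} {G : PreGraph E V} {ρ : I → ℝ≥0∞} (φ : GraphHom G (bernoulliGraph ρ))

namespace GraphHom

lemma eq_of_s_eq_of_toFun_eq {g g' : E} (hs : G.s g = G.s g') (hφ : φ.toFun g = φ.toFun g') :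
    g = g' :=
  (φ.deterministic (G.s g) (φ.toFun g) rfl).unique ⟨rfl, rfl⟩ ⟨hs.symm, hφ.symm⟩

lemma t_eq_fmap (g : E) : G.t g = φ.fmap (φ.toFun g) (G.s g) := by
  have h := (φ.deterministic (G.s g) (φ.toFun g) (Subsingleton.elim _ _)).exists.choose_spec
  exact congrArg G.t (φ.eq_of_s_eq_of_toFun_eq h.1.symm h.2.symm)

lemma pathMap_iterate_shift (x : ℕ → E) (d : ℕ) :
    φ.pathMap (shift^[d] x) = shift^[d] (φ.pathMap x) := by
  ext k
  simp only [pathMap, shift_iterate_apply]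

lemma walk_fmap_pathMap {x : ℕ → E} (hx : x ∈ G.PathSet) (n : ℕ) :
    walk φ.fmap (φ.pathMap x) n (G.t (x n)) = G.t (x 0) := by
  induction n generalizing x with
  | zero => rfl
  | succ n ih =>
    have hsx : shift x ∈ G.PathSet := fun k => hx (k + 1)
    rw [walk, Function.comp_apply,
      show walk φ.fmap (shift (φ.pathMap x)) n (G.t (x (n + 1))) = G.t (x 1) from ih hsx,
      t_eq_fmap φ (x 0), hx 0]
    rfl

end GraphHom

lemma iterate_shift_mem_pathSet {x : ℕ → E} (hx : x ∈ G.PathSet) (d : ℕ) :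
    shift^[d] x ∈ G.PathSet := fun k => by
  rw [shift_iterate_apply, shift_iterate_apply, show k + 1 + d = k + d + 1 by omega]
  exact hx (k + d)

lemma walksMeet_pathMap_iff {x y : ℕ → E} (hx : x ∈ G.PathSet) (hy : y ∈ G.PathSet)
    (hxy : φ.pathMap x = φ.pathMap y) {n d : ℕ} (hd : d ≤ n) :
    WalksMeet φ.fmap (φ.pathMap x) n (G.t (y n)) (G.t (x n)) d ↔ G.t (y d) = G.t (x d) := by
  have key : ∀ z ∈ G.PathSet,
      walk φ.fmap (shift^[d] (φ.pathMap z)) (n - d) (G.t (z n)) = G.t (z d) := fun z hz => by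
    have := φ.walk_fmap_pathMap (iterate_shift_mem_pathSet hz d) (n - d)
    rwa [φ.pathMap_iterate_shift, shift_iterate_apply, shift_iterate_apply,
      Nat.sub_add_cancel hd, zero_add] at this
  rw [WalksMeet, key x hx]
  nth_rw 1 [hxy]
  rw [key y hy]

/-- Time runs downwards along a path (`s (x n) = t (x (n + 1))`), so for a path `x` the walk driven
by its labels from `G.t (x (k + 1))` is its own vertex sequence; `x ∈ firstMeetSet φ a k` says
that the walk from `a` started at time `k + 1` first meets it at time `0`. -/
def firstMeetSet (a : V) (k : ℕ) : Set (ℕ → E) :=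
  {x | WalksMeet φ.fmap (φ.pathMap x) (k + 1) a (G.t (x (k + 1))) 0 ∧
    ¬ WalksMeet φ.fmap (φ.pathMap x) (k + 1) a (G.t (x (k + 1))) 1}

lemma iterate_shift_mem_firstMeetSet_iff {a : V} {L d : ℕ} (hd : d ≤ L) (x : ℕ → E) :
    shift^[d] x ∈ firstMeetSet φ a (L - d) ↔
      WalksMeet φ.fmap (φ.pathMap x) (L + 1) a (G.t (x (L + 1))) d ∧
        ¬ WalksMeet φ.fmap (φ.pathMap x) (L + 1) a (G.t (x (L + 1))) (d + 1) := by
  rw [firstMeetSet, mem_ofPred_eq, φ.pathMap_iterate_shift, walksMeet_iterate_shift,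
    walksMeet_iterate_shift, shift_iterate_apply, show L - d + 1 + d = L + 1 by omega,
    zero_add, add_comm 1 d]

lemma measurableSet_firstMeetSet [Countable E] (a : V) (k : ℕ) :
    MeasurableSet (firstMeetSet φ a k) := by
  refine measurableSet_of_dependsOn (k + 2) fun x y h hx => ?_
  have hlab : ∀ i < k + 1, φ.pathMap x i = φ.pathMap y i := fun i hi => by
    rw [GraphHom.pathMap, GraphHom.pathMap, h i (by omega)]
  rw [firstMeetSet, mem_ofPred_eq, walksMeet_congr hlab, walksMeet_congr hlab,
    h (k + 1) (by omega)] at hx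
  exact hx

lemma pairwiseDisjoint_preimage_firstMeetSet (a : V) (L : ℕ) :
    (Finset.range (L + 1) : Set ℕ).PairwiseDisjoint
      fun d => shift^[d] ⁻¹' firstMeetSet φ a (L - d) := by
  have key : ∀ {d d'}, d < d' → d' ≤ L →
      Disjoint (shift^[d] ⁻¹' firstMeetSet φ a (L - d))
        (shift^[d'] ⁻¹' firstMeetSet φ a (L - d')) := fun hdd' hd' =>
    disjoint_left.2 fun x hx hx' => by
      rw [mem_preimage, iterate_shift_mem_firstMeetSet_iff φ (by omega)] at hx hx'
      exact hx.2 (walksMeet_antitone _ _ _ _ (Nat.succ_le_of_lt hdd') hx'.1)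
  intro d hd d' hd' hne
  simp only [Finset.coe_range, mem_Iio] at hd hd'
  rcases hne.lt_or_gt with h | h
  exacts [key h (by omega), (key h (by omega)).symm]

end FirstMeet

section BorelCantelli

variable {E V I : Type*} [Countable E] {G : PreGraph E V} {ρ : I → ℝ≥0∞}
  (φ : GraphHom G (bernoulliGraph ρ)) {p0 : V → ℝ≥0∞} {m : Measure (ℕ → E)}

lemma tsum_measure_firstMeetSet_le_one (hG : G.IsStochastic) (hm : G.IsMarkovMeasure p0 m)
    (a : V) : ∑' k, m (firstMeetSet φ a k) ≤ 1 := by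
  have := hm.1
  have hshift := hm.measurePreserving_shift hG
  have hsum : ∀ L, ∑ k ∈ Finset.range (L + 1), m (firstMeetSet φ a k) ≤ 1 := fun L =>
    calc ∑ k ∈ Finset.range (L + 1), m (firstMeetSet φ a k)
        = ∑ d ∈ Finset.range (L + 1), m (shift^[d] ⁻¹' firstMeetSet φ a (L - d)) := by
          rw [← Finset.sum_range_reflect]
          refine Finset.sum_congr rfl fun d _ => ?_
          rw [(hshift.iterate d).measure_preimage
            (measurableSet_firstMeetSet φ a _).nullMeasurableSet, Nat.add_sub_cancel]
      _ = m (⋃ d ∈ Finset.range (L + 1), shift^[d] ⁻¹' firstMeetSet φ a (L - d)) :=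
          (measure_biUnion_finset (pairwiseDisjoint_preimage_firstMeetSet φ a L) fun d _ =>
            (measurable_shift.iterate d) (measurableSet_firstMeetSet φ a _)).symm
      _ ≤ 1 := prob_le_one
  exact ENNReal.tsum_le_of_sum_range_le fun n =>
    (Finset.sum_le_sum_of_subset (Finset.range_subset_range.2 n.le_succ)).trans (hsum n)

lemma ae_eventually_iterate_shift_notMem_firstMeetSet [Countable V] (hG : G.IsStochastic)
    (hm : G.IsMarkovMeasure p0 m) :
    ∀ᵐ x ∂m, ∀ a N, ∀ᶠ k in atTop, shift^[N] x ∉ firstMeetSet φ a k := by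
  refine ae_all_iff.2 fun a => ae_all_iff.2 fun N => ?_
  exact ((hm.measurePreserving_shift hG).iterate N).quasiMeasurePreserving.ae
    (ae_eventually_notMem (ne_top_of_le_ne_top ENNReal.one_ne_top
      (tsum_measure_firstMeetSet_le_one φ hG hm a)))

end BorelCantelli

section Paths

variable {E V I : Type*} {G : PreGraph E V} {ρ : I → ℝ≥0∞} (φ : GraphHom G (bernoulliGraph ρ))

lemma exists_t_eq_and_t_succ_ne {x y : ℕ → E} (hx : x ∈ G.PathSet) (hy : y ∈ G.PathSet)
    (hxy : φ.pathMap x = φ.pathMap y) (h0 : G.t (x 0) = G.t (y 0)) (hne : x ≠ y) :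
    ∃ N, G.t (x N) = G.t (y N) ∧ G.t (x (N + 1)) ≠ G.t (y (N + 1)) := by
  by_contra! h
  have ht : ∀ n, G.t (x n) = G.t (y n) := fun n => Nat.rec h0 (fun n ih => h n ih) n
  exact hne (funext fun n => φ.eq_of_s_eq_of_toFun_eq (by rw [hx n, hy n, ht])
    (congrFun hxy n))

lemma iterate_shift_mem_firstMeetSet {x y : ℕ → E} (hx : x ∈ G.PathSet) (hy : y ∈ G.PathSet)
    (hxy : φ.pathMap x = φ.pathMap y) {N L : ℕ} (hNL : N ≤ L) (hN : G.t (x N) = G.t (y N))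
    (hN1 : G.t (x (N + 1)) ≠ G.t (y (N + 1))) :
    shift^[N] x ∈ firstMeetSet φ (G.t (y (L + 1))) (L - N) := by
  rw [iterate_shift_mem_firstMeetSet_iff φ hNL, walksMeet_pathMap_iff φ hx hy hxy (by omega),
    walksMeet_pathMap_iff φ hx hy hxy (by omega)]
  exact ⟨hN.symm, fun h => hN1 h.symm⟩

end Paths

lemma measure_setOf_eq_one_of_ae {X : Type*} [MeasurableSpace X] {μ : Measure X}
    [IsProbabilityMeasure μ] {P : X → Prop} (h : ∀ᵐ x ∂μ, P x) : μ {x | P x} = 1 := by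
  refine le_antisymm prob_le_one ?_
  calc 1 = μ univ := measure_univ.symm
    _ ≤ μ {x | P x} + μ {x | P x}ᶜ := measure_univ_le_add_compl _
    _ = μ {x | P x} := by rw [show μ {x | P x}ᶜ = 0 from ae_iff.1 h, add_zero]

theorem stmt5_general {E V I : Type} [Countable E] [Countable V]
    (G : PreGraph E V) (hG : G.IsStochastic)
    (p0 : V → ℝ≥0∞)
    (m : Measure (ℕ → E)) (hm : G.IsMarkovMeasure p0 m)
    (ρ : I → ℝ≥0∞)
    (φ : GraphHom G (bernoulliGraph ρ)) :
    ∃ F : Set (ℕ → E), F ⊆ G.PathSet ∧ m F = 1 ∧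
      ∀ x ∈ F, ∀ y ∈ F, G.t (x 0) = G.t (y 0) →
        (∀ n : ℕ, φ.toFun (x n) = φ.toFun (y n)) → x = y := by
  have := hm.1
  refine ⟨{x | x ∈ G.PathSet ∧ (∃ᶠ n in atTop, G.t (x n) = G.t (x 0)) ∧
    ∀ a N, ∀ᶠ k in atTop, shift^[N] x ∉ firstMeetSet φ a k}, fun x hx => hx.1, ?_, ?_⟩
  · refine measure_setOf_eq_one_of_ae ?_
    filter_upwards [hm.ae_mem_pathSet, hm.ae_frequently_t_eq_t_zero hG,
      ae_eventually_iterate_shift_notMem_firstMeetSet φ hG hm] with x h₁ h₂ h₃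
    exact ⟨h₁, h₂, h₃⟩
  rintro x ⟨hx, -, hxS⟩ y ⟨hy, hyret, -⟩ h0 hlab
  by_contra hne
  obtain ⟨N, hN, hN1⟩ := exists_t_eq_and_t_succ_ne φ hx hy (funext hlab) h0 hne
  obtain ⟨M, hM⟩ := eventually_atTop.1 (hxS (G.t (y 0)) N)
  obtain ⟨n, hn, hyn⟩ := frequently_atTop.1 hyret (M + N + 1)
  obtain ⟨L, rfl⟩ : ∃ L, n = L + 1 := ⟨n - 1, by omega⟩
  exact hM (L - N) (by omega) (hyn ▸ iterate_shift_mem_firstMeetSet φ hx hy (funext hlab)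
    (by omega) hN hN1)

/-- (`ζ⁰_G ∨ δ_φ^{(∞)} = ε`.) There is a full-measure set `F ⊆ X_G`
such that any two points of `F` whose first edges have the same terminal vertex and
which have the same `φ`-itinerary coincide. -/
theorem stmt5 {E V I : Type} [Countable E] [Countable V] [Countable I] [Nontrivial I]
    (G : PreGraph E V) (hG : G.IsStochastic) (hirr : G.Irreducible)
    (p0 : V → ℝ≥0∞) (hp0 : G.IsStationary p0)
    (m : Measure (ℕ → E)) (hm : G.IsMarkovMeasure p0 m)
    (ρ : I → ℝ≥0∞) (hρ : IsProbVector ρ)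
    (φ : GraphHom G (bernoulliGraph ρ)) :
    ∃ F : Set (ℕ → E), F ⊆ G.PathSet ∧ m F = 1 ∧
      ∀ x ∈ F, ∀ y ∈ F, G.t (x 0) = G.t (y 0) →
        (∀ n : ℕ, φ.toFun (x n) = φ.toFun (y n)) → x = y :=
  stmt5_general G hG p0 m hm ρ φ

end OneSidedMarkov
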